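/- arXiv:1201.3587 — 4 statements merged into one kernel-verified Lean document; each statement's English description precedes it below -/
import Mathlib

section
/- Let G be the spanning subgraph of the hypercube Q_n obtained by deleting every edge whose endpoints lie in layers 2r-1 and 2r for some r (where layer m consists of vertices with exactly m ones in their binary representation). Then G contains no 4-cycle (i.e. no subgraph isomorphic to Q_2). -/
/-!
Identify a vertex `x` of `Q_n` with its set of ones: edges of `Q_n` become covering relations of
the Boolean lattice of subsets, going up one layer. In `G` the lower end of every edge lies in an
even layer, so a vertex of even weight is covered by all of its `G`-neighbours and a vertex of
odd weight covers all of them. In a 4-cycle `a b c d` of `G` with `wt a` even, both `a` and `c`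
are then covered by both `b` and `d`, which forces `a = b ⊓ d = c`; if `wt a` is odd the same
applies to the rotated cycle `b c d a`.
-/

def Qcube (n : ℕ) : SimpleGraph (Fin n → Bool) where
  Adj x y := hammingDist x y = 1
  symm := ⟨by intro x y h; rwa [hammingDist_comm]⟩
  loopless := ⟨by intro x h; simp [hammingDist_self] at h⟩

def wt {n : ℕ} (x : Fin n → Bool) : ℕ := (Finset.univ.filter fun i => x i = true).card

open Finset
open scoped symmDiff

theorem CovBy.inf_eq_of_ne {α : Type*} [SemilatticeInf α] {a b c : α} (hab : a ⋖ b)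
    (hac : a ⋖ c) (hbc : b ≠ c) : b ⊓ c = a := by
  refine (hab.eq_or_eq (le_inf hab.le hac.le) inf_le_left).resolve_right fun h => ?_
  exact (hac.eq_or_eq hab.le (inf_eq_left.1 h)).elim hab.ne' hbc

theorem Finset.covBy_or_covBy_of_card_symmDiff_eq_one {α : Type*} [DecidableEq α]
    {s t : Finset α} (h : #(s ∆ t) = 1) : s ⋖ t ∨ t ⋖ s := by
  simp only [covBy_iff_card_sdiff_eq_one]
  rw [Finset.symmDiff_def, card_union_of_disjoint disjoint_sdiff_sdiff] at h
  rcases Nat.add_eq_one_iff.1 h with ⟨hst, hts⟩ | ⟨hst, hts⟩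
  · exact .inl ⟨sdiff_eq_empty_iff_subset.1 (card_eq_zero.1 hst), hts⟩
  · exact .inr ⟨sdiff_eq_empty_iff_subset.1 (card_eq_zero.1 hts), hst⟩

section Hypercube

variable {n : ℕ}

def ones (x : Fin n → Bool) : Finset (Fin n) := univ.filter fun i => x i = true

theorem ones_injective : Function.Injective (ones (n := n)) := fun x y h =>
  funext fun i => Bool.eq_iff_iff.2 (by simpa [ones] using congrArg (i ∈ ·) h)

theorem card_ones_symmDiff (x y : Fin n → Bool) : #(ones x ∆ ones y) = hammingDist x y := by
  congr 1
  ext i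
  simp only [ones, mem_symmDiff, mem_filter, mem_univ, true_and]
  cases x i <;> cases y i <;> decide

theorem wt_eq_add_one_of_covBy {x y : Fin n → Bool} (h : ones x ⋖ ones y) :
    wt y = wt x + 1 :=
  (Nat.covBy_iff_add_one_eq.1 h.card_finset).symm

theorem Qcube.ones_covBy_or_covBy {x y : Fin n → Bool} (h : (Qcube n).Adj x y) :
    ones x ⋖ ones y ∨ ones y ⋖ ones x :=
  covBy_or_covBy_of_card_symmDiff_eq_one ((card_ones_symmDiff x y).trans h)

theorem Qcube.even_wt_iff_odd_wt {x y : Fin n → Bool} (h : (Qcube n).Adj x y) :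
    Even (wt x) ↔ Odd (wt y) := by
  rcases ones_covBy_or_covBy h with hxy | hyx
  · rw [wt_eq_add_one_of_covBy hxy, Nat.odd_add_one, Nat.not_odd_iff_even]
  · rw [wt_eq_add_one_of_covBy hyx, Nat.even_add_one, Nat.not_even_iff_odd]

def IsCutLayerPair (p q : ℕ) : Prop := ∃ r : ℕ, 1 ≤ r ∧ ({p, q} : Set ℕ) = {2 * r - 1, 2 * r}

def cutQcube (n : ℕ) : SimpleGraph (Fin n → Bool) where
  Adj x y := (Qcube n).Adj x y ∧ ¬ IsCutLayerPair (wt x) (wt y)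
  symm := ⟨fun x y ⟨h, hcut⟩ => ⟨h.symm, by rwa [IsCutLayerPair, Set.pair_comm]⟩⟩
  loopless := ⟨fun x h => (Qcube n).loopless.irrefl x h.1⟩

theorem cutQcube.ones_covBy_of_even {x y : Fin n → Bool} (h : (cutQcube n).Adj x y)
    (hx : Even (wt x)) : ones x ⋖ ones y := by
  refine (Qcube.ones_covBy_or_covBy h.1).resolve_right fun hyx => h.2 ?_
  obtain ⟨r, hr⟩ := hx
  have hxy := wt_eq_add_one_of_covBy hyx
  exact ⟨r, by omega, by rw [Set.pair_comm]; congr 2 <;> omega⟩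

theorem cutQcube.ones_covBy_of_odd {x y : Fin n → Bool} (h : (cutQcube n).Adj x y)
    (hx : Odd (wt x)) : ones y ⋖ ones x :=
  ones_covBy_of_even h.symm ((Qcube.even_wt_iff_odd_wt h.1.symm).2 hx)

theorem cutQcube.eq_of_square_of_even {a b c d : Fin n → Bool} (hab : (cutQcube n).Adj a b)
    (hbc : (cutQcube n).Adj b c) (hcd : (cutQcube n).Adj c d) (hda : (cutQcube n).Adj d a)
    (hbd : b ≠ d) (ha : Even (wt a)) : a = c := by
  have hb : Odd (wt b) := (Qcube.even_wt_iff_odd_wt hab.1).1 ha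
  have hd : Odd (wt d) := (Qcube.even_wt_iff_odd_wt hda.1.symm).1 ha
  have hab' := ones_covBy_of_even hab ha
  have had' := ones_covBy_of_even hda.symm ha
  have hcb := ones_covBy_of_odd hbc hb
  have hcd' := ones_covBy_of_odd hcd.symm hd
  exact ones_injective <|
    (hab'.inf_eq_of_ne had' (ones_injective.ne hbd)).symm.trans
      (hcb.inf_eq_of_ne hcd' (ones_injective.ne hbd))

end Hypercube

/-- Deleting from `Q_n` every edge whose endpoints lie in layers `2r-1` and `2r`
(for some `r ≥ 1`) yields a graph containing no subgraph isomorphic to `Q_2`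
(the 4-cycle). -/
theorem stmt0 (n : ℕ) (G : SimpleGraph (Fin n → Bool))
    (hG : ∀ x y, G.Adj x y ↔ (Qcube n).Adj x y ∧
      ¬ ∃ r : ℕ, 1 ≤ r ∧ ({wt x, wt y} : Set ℕ) = {2 * r - 1, 2 * r}) :
    ¬ ∃ f : (Fin 2 → Bool) → (Fin n → Bool), Function.Injective f ∧
      ∀ a b, (Qcube 2).Adj a b → G.Adj (f a) (f b) := by
  rintro ⟨f, hinj, hf⟩
  have adj (u v : Fin 2 → Bool) (huv : hammingDist u v = 1) : (cutQcube n).Adj (f u) (f v) :=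
    (hG _ _).1 (hf u v huv)
  have hab := adj ![false, false] ![false, true] (by decide)
  have hbc := adj ![false, true] ![true, true] (by decide)
  have hcd := adj ![true, true] ![true, false] (by decide)
  have hda := adj ![true, false] ![false, false] (by decide)
  have hac : f ![false, false] ≠ f ![true, true] := hinj.ne (by decide)
  have hbd : f ![false, true] ≠ f ![true, false] := hinj.ne (by decide)
  rcases Nat.even_or_odd (wt (f ![false, false])) with ha | ha
  · exact hac (cutQcube.eq_of_square_of_even hab hbc hcd hda hbd ha)
  · have hb : Even (wt (f ![false, true])) := (Qcube.even_wt_iff_odd_wt hab.1.symm).2 ha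
    exact hbd (cutQcube.eq_of_square_of_even hbc hcd hda hab hac.symm hb)
end

section
/- The induced subgraph of Q_n obtained by deleting all vertices whose Hamming weight is congruent to 0 mod 3 contains no copy of the graph R_2 formed by removing a single vertex from Q_3; consequently π_v(R_2) ≥ 2/3. -/
open Filter

/-- The set `S ⊆ V(Q_n)` contains no copy of `R_2` (`Q_3` minus one vertex):
there is no `3`-dimensional subcube of `Q_n` all of whose vertices except
possibly one corner lie in `S`. -/
def R2Free (n : ℕ) (S : Set (Fin n → Bool)) : Prop :=
  ¬ ∃ (f : (Fin 3 → Bool) → (Fin n → Bool)) (v₀ : Fin 3 → Bool),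
    Function.Injective f ∧
    (∀ a b, (Qcube 3).Adj a b → (Qcube n).Adj (f a) (f b)) ∧
    ∀ a, a ≠ v₀ → f a ∈ S

/-!
Along an edge of `Q_n` the weight changes by `±1`, and a 4-cycle of `Q_n` is a square
`x, x + eᵢ, x + eᵢ + eⱼ, x + eⱼ`, so the weights around it satisfy `wt x + wt z = wt y + wt u`.
On an embedded copy of `Q_3` this makes the weight affine, `a ↦ w + ∑ aₖ dₖ` with `dₖ = ±1`,
i.e. `a ↦ m + d(a, a*)` for the lowest vertex `a*`. Its values `m, m + 1, m + 2, m + 3` occur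
with multiplicities `1, 3, 3, 1`, so at least two vertices of the copy have weight `≡ 0 (mod 3)`
and deleting one corner cannot save it.

The counts `c_r` of vertices with weight `≡ r (mod 3)` satisfy `c_r(n+1) = c_r(n) + c_{r-1}(n)`,
which only permutes and negates their pairwise differences; these therefore stay in `{-1, 0, 1}`,
whence `c_0 ≤ (2^n + 2) / 3`.
-/

open Finset

def flipBit {n : ℕ} (x : Fin n → Bool) (i : Fin n) : Fin n → Bool :=
  Function.update x i (!x i)

section flipBit

variable {n : ℕ} (x : Fin n → Bool)

@[simp]
lemma flipBit_apply_self (i : Fin n) : flipBit x i i = !x i := by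
  simp [flipBit]

lemma flipBit_apply_of_ne {i j : Fin n} (h : j ≠ i) : flipBit x i j = x j :=
  Function.update_of_ne h _ _

@[simp]
lemma flipBit_flipBit_self (i : Fin n) : flipBit (flipBit x i) i = x := by
  funext j
  by_cases h : j = i
  · subst h; simp
  · rw [flipBit_apply_of_ne _ h, flipBit_apply_of_ne _ h]

lemma eq_and_eq_of_flipBit_flipBit_eq {i j k l : Fin n} (hji : j ≠ i) (hki : k ≠ i)
    (h : flipBit (flipBit x i) j = flipBit (flipBit x k) l) : k = j ∧ l = i := by
  have hli : l = i := by
    by_contra hli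
    have := congrFun h i
    rw [flipBit_apply_of_ne _ hji.symm, flipBit_apply_self, flipBit_apply_of_ne _ (Ne.symm hli),
      flipBit_apply_of_ne _ hki.symm] at this
    simp at this
  refine ⟨by_contra fun hkj => ?_, hli⟩
  have := congrFun h k
  rw [hli, flipBit_apply_of_ne _ hkj, flipBit_apply_of_ne _ hki, flipBit_apply_of_ne _ hki,
    flipBit_apply_self] at this
  simp at this

end flipBit

lemma Qcube.adj_iff_exists_flipBit {n : ℕ} {x y : Fin n → Bool} :
    (Qcube n).Adj x y ↔ ∃ i, y = flipBit x i := by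
  change hammingDist x y = 1 ↔ _
  rw [hammingDist, card_eq_one]
  constructor
  · rintro ⟨i, hi⟩
    refine ⟨i, funext fun j => ?_⟩
    have hj := Finset.ext_iff.1 hi j
    simp only [mem_filter, mem_univ, true_and, mem_singleton] at hj
    by_cases hji : j = i
    · subst hji; rw [flipBit_apply_self, Bool.eq_not_iff]; exact Ne.symm (hj.2 rfl)
    · rw [flipBit_apply_of_ne _ hji]; exact (not_not.1 (mt hj.1 hji)).symm
  · rintro ⟨i, rfl⟩
    refine ⟨i, ext fun j => ?_⟩
    by_cases hji : j = i
    · subst hji; simp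
    · simp [flipBit_apply_of_ne _ hji, hji]

lemma wt_flipBit {n : ℕ} (x : Fin n → Bool) (i : Fin n) :
    (wt (flipBit x i) : ℤ) = wt x + if x i then -1 else 1 := by
  have split : ∀ y : Fin n → Bool,
      (wt y : ℤ) = (if y i then 1 else 0) + ∑ j ∈ univ.erase i, if y j then 1 else 0 := by
    intro y
    rw [add_sum_erase _ (fun j => if y j then (1 : ℤ) else 0) (mem_univ i), wt,
      card_filter]
    push_cast
    rfl
  have rest : ∑ j ∈ univ.erase i, (if flipBit x i j then (1 : ℤ) else 0) =
      ∑ j ∈ univ.erase i, if x j then 1 else 0 :=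
    sum_congr rfl fun j hj => by rw [flipBit_apply_of_ne _ (ne_of_mem_erase hj)]
  rw [split, split x, rest, flipBit_apply_self]
  cases x i <;>
    simp only [Bool.not_false, Bool.not_true, if_true, if_false, Bool.false_eq_true] <;> ring

lemma Qcube.wt_eq_add_one_or_sub_one {n : ℕ} {x y : Fin n → Bool} (h : (Qcube n).Adj x y) :
    (wt y : ℤ) = wt x + 1 ∨ (wt y : ℤ) = wt x - 1 := by
  obtain ⟨i, rfl⟩ := Qcube.adj_iff_exists_flipBit.1 h
  rw [wt_flipBit]
  cases x i <;> simp [← sub_eq_add_neg]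

lemma Qcube.wt_add_wt_eq_of_square {n : ℕ} {x y z u : Fin n → Bool} (hxy : (Qcube n).Adj x y)
    (hyz : (Qcube n).Adj y z) (hxu : (Qcube n).Adj x u) (huz : (Qcube n).Adj u z)
    (hxz : x ≠ z) (hyu : y ≠ u) : (wt x + wt z : ℤ) = wt y + wt u := by
  obtain ⟨i, rfl⟩ := Qcube.adj_iff_exists_flipBit.1 hxy
  obtain ⟨j, rfl⟩ := Qcube.adj_iff_exists_flipBit.1 hyz
  obtain ⟨k, rfl⟩ := Qcube.adj_iff_exists_flipBit.1 hxu
  obtain ⟨l, hl⟩ := Qcube.adj_iff_exists_flipBit.1 huz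
  have hji : j ≠ i := by rintro rfl; simp at hxz
  have hki : k ≠ i := by rintro rfl; simp at hyu
  obtain ⟨rfl, rfl⟩ := eq_and_eq_of_flipBit_flipBit_eq x hji hki hl
  rw [wt_flipBit, wt_flipBit, wt_flipBit, flipBit_apply_of_ne _ hji]
  ring

instance (n : ℕ) : DecidableRel (Qcube n).Adj :=
  fun x y => inferInstanceAs (Decidable (hammingDist x y = 1))

lemma exists_wt_eq_affine_of_cube_embedding {n : ℕ} {f : (Fin 3 → Bool) → (Fin n → Bool)}
    (hf : Function.Injective f) (hadj : ∀ a b, (Qcube 3).Adj a b → (Qcube n).Adj (f a) (f b)) :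
    ∃ (w : ℤ) (d : Fin 3 → ℤ), (∀ k, d k = 1 ∨ d k = -1) ∧
      ∀ a, (wt (f a) : ℤ) = w + ∑ k, if a k then d k else 0 := by
  set g : (Fin 3 → Bool) → ℤ := fun a => wt (f a)
  have face : ∀ a b c e, (Qcube 3).Adj a b → (Qcube 3).Adj b c → (Qcube 3).Adj a e →
      (Qcube 3).Adj e c → a ≠ c → b ≠ e → g a + g c = g b + g e :=
    fun a b c e hab hbc hae hec hac hbe =>
      Qcube.wt_add_wt_eq_of_square (hadj _ _ hab) (hadj _ _ hbc) (hadj _ _ hae) (hadj _ _ hec)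
        (hf.ne hac) (hf.ne hbe)
  have edge : ∀ a b, (Qcube 3).Adj a b → g b - g a = 1 ∨ g b - g a = -1 := fun a b hab => by
    have := Qcube.wt_eq_add_one_or_sub_one (hadj a b hab)
    simp only [g]
    omega
  have f110 := face ![false, false, false] ![true, false, false] ![true, true, false]
    ![false, true, false] (by decide) (by decide) (by decide) (by decide) (by decide) (by decide)
  have f101 := face ![false, false, false] ![true, false, false] ![true, false, true]
    ![false, false, true] (by decide) (by decide) (by decide) (by decide) (by decide) (by decide)
  have f011 := face ![false, false, false] ![false, true, false] ![false, true, true]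
    ![false, false, true] (by decide) (by decide) (by decide) (by decide) (by decide) (by decide)
  have f111 := face ![true, false, false] ![true, true, false] ![true, true, true]
    ![true, false, true] (by decide) (by decide) (by decide) (by decide) (by decide) (by decide)
  refine ⟨g ![false, false, false], ![g ![true, false, false] - g ![false, false, false],
    g ![false, true, false] - g ![false, false, false],
    g ![false, false, true] - g ![false, false, false]], fun k => ?_, fun a => ?_⟩
  · fin_cases k <;> exact edge _ _ (by decide)
  · obtain ⟨a₀, a₁, a₂, rfl⟩ : ∃ a₀ a₁ a₂, a = ![a₀, a₁, a₂] :=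
      ⟨a 0, a 1, a 2, funext fun j => by fin_cases j <;> rfl⟩
    cases a₀ <;> cases a₁ <;> cases a₂ <;> simp [Fin.sum_univ_three] <;> linarith

lemma exists_ne_sum_eq_zero_zmod_three (w : ZMod 3) (d : Fin 3 → ZMod 3) (hd : ∀ k, d k ≠ 0) :
    ∃ a c : Fin 3 → Bool, a ≠ c ∧ w + ∑ k, (if a k then d k else 0) = 0 ∧
      w + ∑ k, (if c k then d k else 0) = 0 := by
  revert w d
  decide

theorem r2Free_wt_mod_three_ne_zero (n : ℕ) :
    R2Free n {x : Fin n → Bool | ¬ (wt x % 3 = 0)} := by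
  rintro ⟨f, v₀, hf, hadj, hS⟩
  obtain ⟨w, d, hd, hwt⟩ := exists_wt_eq_affine_of_cube_embedding hf hadj
  obtain ⟨a, c, hac, ha, hc⟩ := exists_ne_sum_eq_zero_zmod_three (w : ZMod 3) (fun k => d k)
    fun k => by rcases hd k with h | h <;> simp only [h] <;> decide
  have hzero : ∀ a, (w : ZMod 3) + ∑ k, (if a k then (d k : ZMod 3) else 0) = 0 →
      wt (f a) % 3 = 0 := fun a h => by
    have hcast : ((wt (f a) : ℤ) : ZMod 3) = 0 := by rw [hwt a]; push_cast; exact h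
    exact Nat.mod_eq_zero_of_dvd ((ZMod.natCast_eq_zero_iff _ _).1 (by exact_mod_cast hcast))
  by_cases hav : a = v₀
  · exact hS c (hav ▸ hac.symm) (hzero c hc)
  · exact hS a hav (hzero a ha)

def layerCount (n r : ℕ) : ℕ := #{x : Fin n → Bool | wt x % 3 = r}

lemma wt_cons {n : ℕ} (b : Bool) (x : Fin n → Bool) : wt (Fin.cons b x : Fin (n + 1) → Bool) =
    b.toNat + wt x := by
  rw [wt, wt, card_filter, card_filter, Fin.sum_univ_succ]
  simp only [Fin.cons_zero, Fin.cons_succ]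
  cases b <;> rfl

lemma layerCount_succ (n : ℕ) {r : ℕ} (hr : r < 3) :
    layerCount (n + 1) r = layerCount n r + layerCount n ((r + 2) % 3) := by
  simp only [layerCount, card_filter]
  rw [← (Fin.consEquiv fun _ : Fin (n + 1) => Bool).sum_comp, Fintype.sum_prod_type,
    Fintype.sum_bool, ← sum_add_distrib, ← sum_add_distrib]
  refine sum_congr rfl fun x _ => ?_
  simp only [Fin.consEquiv, Equiv.coe_fn_mk, wt_cons, Bool.toNat_true, Bool.toNat_false]
  split_ifs <;> omega

lemma layerCount_zero_add_one_add_two (n : ℕ) :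
    layerCount n 0 + layerCount n 1 + layerCount n 2 = 2 ^ n := by
  have h := card_eq_sum_card_fiberwise (s := (univ : Finset (Fin n → Bool))) (t := range 3)
    (f := fun x => wt x % 3) fun x _ => mem_range.2 (Nat.mod_lt _ (by norm_num))
  simp only [card_univ, Fintype.card_fun, Fintype.card_bool, Fintype.card_fin,
    sum_range_succ, sum_range_zero, zero_add] at h
  exact h.symm

lemma layerCount_le_add_one (n : ℕ) {r s : ℕ} (hr : r < 3) (hs : s < 3) :
    layerCount n r ≤ layerCount n s + 1 := by
  induction n generalizing r s with
  | zero => interval_cases r <;> interval_cases s <;> decide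
  | succ n ih =>
    have h01 := ih (r := 0) (s := 1) (by norm_num) (by norm_num)
    have h10 := ih (r := 1) (s := 0) (by norm_num) (by norm_num)
    have h02 := ih (r := 0) (s := 2) (by norm_num) (by norm_num)
    have h20 := ih (r := 2) (s := 0) (by norm_num) (by norm_num)
    have h12 := ih (r := 1) (s := 2) (by norm_num) (by norm_num)
    have h21 := ih (r := 2) (s := 1) (by norm_num) (by norm_num)
    rw [layerCount_succ n hr, layerCount_succ n hs]
    interval_cases r <;> interval_cases s <;> norm_num <;> omega

lemma three_mul_layerCount_le (n : ℕ) {r : ℕ} (hr : r < 3) :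
    3 * layerCount n r ≤ 2 ^ n + 2 := by
  have := layerCount_zero_add_one_add_two n
  have := layerCount_le_add_one n hr (s := 0) (by norm_num)
  have := layerCount_le_add_one n hr (s := 1) (by norm_num)
  have := layerCount_le_add_one n hr (s := 2) (by norm_num)
  interval_cases r <;> omega

lemma ncard_wt_mod_three_ne_zero_add_layerCount (n : ℕ) :
    {x : Fin n → Bool | ¬ (wt x % 3 = 0)}.ncard + layerCount n 0 = 2 ^ n := by
  rw [Set.ncard_eq_toFinset_card', Set.toFinset_ofPred, layerCount, add_comm,
    card_filter_add_card_filter_not]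
  simp

lemma two_thirds_sub_le_density (n : ℕ) :
    2 / 3 - (1 / 2 : ℝ) ^ n ≤
      ({x : Fin n → Bool | ¬ (wt x % 3 = 0)}.ncard : ℝ) / 2 ^ n := by
  have hcard : ({x : Fin n → Bool | ¬ (wt x % 3 = 0)}.ncard : ℝ) + layerCount n 0 = 2 ^ n := by
    exact_mod_cast ncard_wt_mod_three_ne_zero_add_layerCount n
  have hlayer : 3 * (layerCount n 0 : ℝ) ≤ 2 ^ n + 2 := by
    exact_mod_cast three_mul_layerCount_le n (by norm_num)
  have hpow : (1 / 2 : ℝ) ^ n * 2 ^ n = 1 := by rw [← mul_pow]; norm_num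
  rw [le_div_iff₀ (by positivity)]
  nlinarith

lemma bddAbove_ncard_div (n : ℕ) (P : Set (Fin n → Bool) → Prop) :
    BddAbove {x : ℝ | ∃ S : Set (Fin n → Bool), P S ∧
      x = (S.ncard : ℝ) / (2 ^ n : ℝ)} := by
  refine ⟨1, ?_⟩
  rintro _ ⟨S, -, rfl⟩
  rw [div_le_one (by positivity)]
  have := Set.ncard_le_card S
  rw [Nat.card_eq_fintype_card, Fintype.card_fun, Fintype.card_bool, Fintype.card_fin] at this
  exact_mod_cast this

/-- Deleting all vertices of `Q_n` whose Hamming weight is `≡ 0 (mod 3)` leaves an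
induced subgraph with no copy of `R_2` (`Q_3` minus a vertex); consequently
`π_v(R_2) ≥ 2/3`. -/
theorem stmt9 (b : ℕ → ℝ)
    (hb : ∀ n, b n = sSup {x : ℝ | ∃ S : Set (Fin n → Bool), R2Free n S ∧
      x = (S.ncard : ℝ) / (2 ^ n : ℝ)}) :
    (∀ n : ℕ, R2Free n {x : Fin n → Bool | ¬ (wt x % 3 = 0)}) ∧
    ∀ ε : ℝ, 0 < ε → ∃ N : ℕ, ∀ n ≥ N, 2 / 3 - ε ≤ b n := by
  refine ⟨r2Free_wt_mod_three_ne_zero, fun ε hε => ?_⟩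
  obtain ⟨N, hN⟩ := exists_pow_lt_of_lt_one hε (by norm_num : (1 / 2 : ℝ) < 1)
  refine ⟨N, fun n hn => ?_⟩
  calc 2 / 3 - ε ≤ 2 / 3 - (1 / 2 : ℝ) ^ n := by
        linarith [pow_le_pow_of_le_one (by norm_num : (0 : ℝ) ≤ 1 / 2) (by norm_num) hn]
    _ ≤ ({x : Fin n → Bool | ¬ (wt x % 3 = 0)}.ncard : ℝ) / 2 ^ n :=
        two_thirds_sub_le_density n
    _ ≤ b n :=
        hb n ▸ le_csSup (bddAbove_ncard_div n _) ⟨_, r2Free_wt_mod_three_ne_zero n, rfl⟩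
end

section
/- Let M be an n-vertex 3-uniform hypergraph with the maximum number of edges subject to being F-free for a family F of 3-graphs, where n ≥ 5. Then the difference between the maximum and minimum degree densities of vertices of M is at most 2/(n-1), where the degree density of v is deg(v)/binom(n-1,2). -/
/-!
Deleting a vertex `v` and replacing it by a twin of `u` keeps `M` free of covering 3-graphs and
changes the number of edges by `deg u - codeg u v - deg v`. Maximality of `M` makes this change
nonpositive, and `codeg u v ≤ n - 2`, so `deg u - deg v ≤ n - 2`; dividing by
`C(n-1, 2) = (n-1)(n-2)/2` gives `2/(n-1)`.
-/

/-- A 3-uniform hypergraph `M` on `Fin n` contains a member of the family `F`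
(a family of 3-graphs, each given by its number of vertices and edge set) as a
subhypergraph. -/
def ContainsMember {n : ℕ} (F : Set (Σ k : ℕ, Finset (Finset (Fin k))))
    (M : Finset (Finset (Fin n))) : Prop :=
  ∃ A ∈ F, ∃ f : Fin A.1 → Fin n, Function.Injective f ∧
    ∀ e ∈ A.2, e.image f ∈ M

/-- The degree of a vertex in a 3-uniform hypergraph. -/
def hdeg {n : ℕ} (M : Finset (Finset (Fin n))) (v : Fin n) : ℕ :=
  (M.filter fun e => v ∈ e).card

open Finset

section Clone

variable {α : Type*} [DecidableEq α]

def codeg (M : Finset (Finset α)) (u v : α) : ℕ :=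
  (M.filter fun e => u ∈ e ∧ v ∈ e).card

theorem codeg_le_card_sub_two [Fintype α] {M : Finset (Finset α)} (hM3 : ∀ e ∈ M, e.card = 3)
    {u v : α} (huv : u ≠ v) : codeg M u v ≤ Fintype.card α - 2 := by
  have hpair : ({u, v} : Finset α).card = 2 := card_pair huv
  -- an edge through `u` and `v` is determined by its third vertex
  have hsub : M.filter (fun e => u ∈ e ∧ v ∈ e) ⊆
      (univ \ {u, v}).image fun w => insert w {u, v} := by
    intro e he
    obtain ⟨he, hue, hve⟩ := mem_filter.1 he
    have huve : {u, v} ⊆ e := insert_subset hue (singleton_subset_iff.2 hve)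
    obtain ⟨w, hw⟩ : ∃ w, e \ {u, v} = {w} := by
      rw [← card_eq_one, card_sdiff_of_subset huve, hM3 e he, hpair]
    have hw' : w ∈ e \ {u, v} := hw ▸ mem_singleton_self w
    refine mem_image.2 ⟨w, mem_sdiff.2 ⟨mem_univ w, (mem_sdiff.1 hw').2⟩, ?_⟩
    rw [insert_eq w, ← hw, sdiff_union_of_subset huve]
  calc codeg M u v ≤ ((univ \ {u, v}).image fun w => insert w {u, v}).card := card_le_card hsub
    _ ≤ (univ \ {u, v}).card := card_image_le
    _ = Fintype.card α - 2 := by rw [card_sdiff_of_subset (subset_univ _), card_univ, hpair]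

/-- `v` is deleted and replaced by a twin of `u`; no edge contains both twins. -/
def cloneVertex (M : Finset (Finset α)) (u v : α) : Finset (Finset α) :=
  M.filter (v ∉ ·) ∪
    (M.filter fun e => u ∈ e ∧ v ∉ e).image (·.map (Equiv.swap u v).toEmbedding)

variable {M : Finset (Finset α)} {u v : α} {e : Finset α}

theorem map_swap_eq_self (hu : u ∉ e) (hv : v ∉ e) :
    e.map (Equiv.swap u v).toEmbedding = e := by
  ext x
  rw [mem_map_equiv, Equiv.symm_swap]
  by_cases hxu : x = u
  · subst hxu; simp [hu, hv]
  by_cases hxv : x = v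
  · subst hxv; simp [hu, hv]
  rw [Equiv.swap_apply_of_ne_of_ne hxu hxv]

theorem mem_cloneVertex :
    e ∈ cloneVertex M u v ↔ (e ∈ M ∧ v ∉ e) ∨
      ∃ e' ∈ M, u ∈ e' ∧ v ∉ e' ∧ e'.map (Equiv.swap u v).toEmbedding = e := by
  simp [cloneVertex, and_assoc]

theorem notMem_of_mem_cloneVertex_of_mem (he : e ∈ cloneVertex M u v) (hu : u ∈ e) : v ∉ e := by
  rcases mem_cloneVertex.1 he with ⟨-, hv⟩ | ⟨e', -, -, hv', rfl⟩
  · exact hv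
  · rw [mem_map_equiv, Equiv.symm_swap, Equiv.swap_apply_left] at hu
    exact absurd hu hv'

theorem mem_of_mem_cloneVertex_of_notMem (he : e ∈ cloneVertex M u v) (hv : v ∉ e) : e ∈ M := by
  rcases mem_cloneVertex.1 he with ⟨he, -⟩ | ⟨e', -, hu', -, rfl⟩
  · exact he
  · simp [mem_map_equiv, hu'] at hv

theorem map_swap_mem_of_mem_cloneVertex_of_notMem (he : e ∈ cloneVertex M u v) (hu : u ∉ e) :
    e.map (Equiv.swap u v).toEmbedding ∈ M := by
  rcases mem_cloneVertex.1 he with ⟨he, hv⟩ | ⟨e', he', -, -, rfl⟩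
  · rwa [map_swap_eq_self hu hv]
  · rwa [map_map, ← Equiv.trans_toEmbedding, Equiv.swap_swap, Equiv.refl_toEmbedding, map_refl]

theorem card_cloneVertex :
    (cloneVertex M u v).card + (M.filter (v ∈ ·)).card + codeg M u v =
      M.card + (M.filter (u ∈ ·)).card := by
  have hdisj : Disjoint (M.filter (v ∉ ·))
      ((M.filter fun e => u ∈ e ∧ v ∉ e).image (·.map (Equiv.swap u v).toEmbedding)) := by
    refine disjoint_left.2 fun e he he' => (mem_filter.1 he).2 ?_
    obtain ⟨e', he'', rfl⟩ := mem_image.1 he'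
    simpa [mem_map_equiv] using (mem_filter.1 he'').2.1
  have hv := card_filter_add_card_filter_not (s := M) (fun e => v ∈ e)
  have hu := card_filter_add_card_filter_not (s := M.filter (u ∈ ·)) (fun e => v ∈ e)
  rw [filter_filter, filter_filter] at hu
  rw [cloneVertex, card_union_of_disjoint hdisj,
    card_image_of_injective _ (map_injective _), codeg]
  omega

end Clone

section Freeness

variable {n : ℕ} {F : Set (Σ k : ℕ, Finset (Finset (Fin k)))} {M : Finset (Finset (Fin n))}
  {u v : Fin n}

/-- Twins create no copy of a covering 3-graph: a copy using both `u` and its twin `v` would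
need an edge through both, a copy avoiding `v` already lies in `M`, and a copy avoiding `u` is
moved into `M` by exchanging `u` and `v`. -/
theorem ContainsMember.of_cloneVertex
    (hFcov : ∀ A ∈ F, ∀ x y : Fin A.1, x ≠ y → ∃ e ∈ A.2, x ∈ e ∧ y ∈ e) (huv : u ≠ v)
    (h : ContainsMember F (cloneVertex M u v)) : ContainsMember F M := by
  obtain ⟨A, hA, f, hf, hfe⟩ := h
  have notMem_image {w : Fin n} (hw : w ∉ Set.range f) (e : Finset (Fin A.1)) :
      w ∉ e.image f := fun h => hw (coe_image_subset_range h)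
  by_cases hu : u ∈ Set.range f
  · by_cases hv : v ∈ Set.range f
    · obtain ⟨x, rfl⟩ := hu
      obtain ⟨y, rfl⟩ := hv
      obtain ⟨e, he, hxe, hye⟩ := hFcov A hA x y (ne_of_apply_ne f huv)
      exact absurd (mem_image_of_mem f hye)
        (notMem_of_mem_cloneVertex_of_mem (hfe e he) (mem_image_of_mem f hxe))
    · exact ⟨A, hA, f, hf, fun e he =>
        mem_of_mem_cloneVertex_of_notMem (hfe e he) (notMem_image hv e)⟩
  · refine ⟨A, hA, Equiv.swap u v ∘ f, (Equiv.injective _).comp hf, fun e he => ?_⟩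
    rw [← image_image, ← Equiv.coe_toEmbedding, ← map_eq_image]
    exact map_swap_mem_of_mem_cloneVertex_of_notMem (hfe e he) (notMem_image hu e)

theorem hdeg_le_hdeg_add_of_isMax
    (hFcov : ∀ A ∈ F, ∀ x y : Fin A.1, x ≠ y → ∃ e ∈ A.2, x ∈ e ∧ y ∈ e)
    (hM3 : ∀ e ∈ M, e.card = 3) (hMfree : ¬ ContainsMember F M)
    (hMmax : ∀ M' : Finset (Finset (Fin n)), (∀ e ∈ M', e.card = 3) →
      ¬ ContainsMember F M' → M'.card ≤ M.card)
    (u v : Fin n) : hdeg M u ≤ hdeg M v + (n - 2) := by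
  rcases eq_or_ne u v with rfl | huv
  · exact Nat.le_add_right _ _
  have hclone3 : ∀ e ∈ cloneVertex M u v, e.card = 3 := fun e he => by
    rcases mem_cloneVertex.1 he with ⟨he, -⟩ | ⟨e', he', -, -, rfl⟩
    · exact hM3 e he
    · rw [card_map, hM3 e' he']
  have hle := hMmax _ hclone3 (mt (ContainsMember.of_cloneVertex hFcov huv) hMfree)
  have hcodeg := codeg_le_card_sub_two hM3 huv
  rw [Fintype.card_fin] at hcodeg
  have hcard := card_cloneVertex (M := M) (u := u) (v := v)
  unfold hdeg
  omega

end Freeness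

theorem sub_two_div_choose_two {n : ℕ} (hn : 3 ≤ n) :
    ((n : ℝ) - 2) / ((n - 1).choose 2 : ℝ) = 2 / ((n : ℝ) - 1) := by
  have hn' : (3 : ℝ) ≤ n := by exact_mod_cast hn
  have h1 : (n : ℝ) - 1 ≠ 0 := by linarith
  have h2 : (n : ℝ) - 2 ≠ 0 := by linarith
  rw [Nat.cast_choose_two, Nat.cast_sub (by omega), Nat.cast_one, sub_sub, one_add_one_eq_two]
  field_simp

theorem stmt11_general (n : ℕ) (hn : 5 ≤ n)
    (F : Set (Σ k : ℕ, Finset (Finset (Fin k))))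
    (hFcov : ∀ A ∈ F, ∀ x y : Fin A.1, x ≠ y → ∃ e ∈ A.2, x ∈ e ∧ y ∈ e)
    (M : Finset (Finset (Fin n))) (hM3 : ∀ e ∈ M, e.card = 3)
    (hMfree : ¬ ContainsMember F M)
    (hMmax : ∀ M' : Finset (Finset (Fin n)), (∀ e ∈ M', e.card = 3) →
      ¬ ContainsMember F M' → M'.card ≤ M.card) :
    ∀ u v : Fin n,
      (hdeg M u : ℝ) / ((n - 1).choose 2 : ℝ) - (hdeg M v : ℝ) / ((n - 1).choose 2 : ℝ)
        ≤ 2 / ((n : ℝ) - 1) := by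
  intro u v
  have hgap : (hdeg M u : ℝ) - hdeg M v ≤ n - 2 := by
    have hnat := hdeg_le_hdeg_add_of_isMax hFcov hM3 hMfree hMmax u v
    have hcast : (hdeg M u : ℝ) ≤ hdeg M v + (n - 2 : ℕ) := by exact_mod_cast hnat
    rw [Nat.cast_sub (by omega), Nat.cast_two] at hcast
    linarith
  rw [div_sub_div_same, ← sub_two_div_choose_two (by omega : 3 ≤ n)]
  gcongr

/-- If `M` is an `n`-vertex 3-uniform hypergraph with the maximum number of edges
subject to being `F`-free (for a family `F` of covering 3-graphs), and `n ≥ 5`,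
then the maximum and minimum degree densities of `M` differ by at most `2/(n-1)`,
where the degree density of `v` is `deg(v)/C(n-1,2)`. -/
theorem stmt11 (n : ℕ) (hn : 5 ≤ n)
    (F : Set (Σ k : ℕ, Finset (Finset (Fin k))))
    (hF3 : ∀ A ∈ F, ∀ e ∈ Sigma.snd A, e.card = 3)
    (hFcov : ∀ A ∈ F, ∀ x y : Fin A.1, x ≠ y → ∃ e ∈ A.2, x ∈ e ∧ y ∈ e)
    (M : Finset (Finset (Fin n))) (hM3 : ∀ e ∈ M, e.card = 3)
    (hMfree : ¬ ContainsMember F M)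
    (hMmax : ∀ M' : Finset (Finset (Fin n)), (∀ e ∈ M', e.card = 3) →
      ¬ ContainsMember F M' → M'.card ≤ M.card) :
    ∀ u v : Fin n,
      (hdeg M u : ℝ) / ((n - 1).choose 2 : ℝ) - (hdeg M v : ℝ) / ((n - 1).choose 2 : ℝ)
        ≤ 2 / ((n : ℝ) - 1) :=
  stmt11_general n hn F hFcov M hM3 hMfree hMmax
end

section
/- For flags over a fixed type σ in a large graph G, the product of subflag densities approximately factorizes: for σ-flags F_a, F_b of size m and an embedding θ of σ into G, p(F_a,θ;G)·p(F_b,θ;G) = p(F_a,F_b,θ;G) + O(1/|V(G)|), where p(F_a,F_b,θ;G) is the probability that two independently chosen random m-sets, each containing im(θ) and intersecting exactly in im(θ), induce flags isomorphic to F_a and F_b respectively. -/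
/-- `R` (an `m`-set of vertices of `G` containing the image of the labelling `θ`)
induces a flag isomorphic to the flag `(F, l)` (a graph `F` on `Fin m` with label
map `l : Fin s → Fin m`): there is a bijection of `Fin m` onto `R` carrying the
labels to `θ` and edges of `F` exactly to edges of `G`. -/
def FlagCopy {s m : ℕ} {V : Type*} (G : SimpleGraph V) (θ : Fin s → V)
    (F : SimpleGraph (Fin m)) (l : Fin s → Fin m) (R : Finset V) : Prop :=
  ∃ e : Fin m → V, Function.Injective e ∧ Set.range e = ↑R ∧
    (∀ i, e (l i) = θ i) ∧ ∀ x y, F.Adj x y ↔ G.Adj (e x) (e y)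

/-- `p(F,θ;G)`: the probability that a uniformly random `m`-set of vertices of `G`
containing `im(θ)` induces a flag isomorphic to `F`. -/
noncomputable def pFlag {s m : ℕ} {V : Type*} (G : SimpleGraph V) (θ : Fin s → V)
    (F : SimpleGraph (Fin m)) (l : Fin s → Fin m) : ℝ :=
  (({R : Finset V | R.card = m ∧ Set.range θ ⊆ ↑R ∧ FlagCopy G θ F l R}).ncard : ℝ) /
    (({R : Finset V | R.card = m ∧ Set.range θ ⊆ ↑R}).ncard : ℝ)

/-- `p(F_a,F_b,θ;G)`: the probability that two independently chosen random
`m`-sets, each containing `im(θ)` and intersecting exactly in `im(θ)`, induce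
flags isomorphic to `F_a` and `F_b` respectively. -/
noncomputable def pFlagPair {s m : ℕ} {V : Type*} (G : SimpleGraph V) (θ : Fin s → V)
    (Fa Fb : SimpleGraph (Fin m)) (la lb : Fin s → Fin m) : ℝ :=
  (({P : Finset V × Finset V | P.1.card = m ∧ P.2.card = m ∧
      (↑P.1 ∩ ↑P.2 : Set V) = Set.range θ ∧
      FlagCopy G θ Fa la P.1 ∧ FlagCopy G θ Fb lb P.2}).ncard : ℝ) /
    (({P : Finset V × Finset V | P.1.card = m ∧ P.2.card = m ∧
      (↑P.1 ∩ ↑P.2 : Set V) = Set.range θ}).ncard : ℝ)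

/-!
Let `T = im θ`, `n = |V| - |T|`, `k = m - |T|`, and let `D` be the family of `m`-sets
containing `T`. The product `p(F_a,θ;G) p(F_b,θ;G)` is the density of `F_a`-`F_b` pairs in
`D × D`, while `p(F_a,F_b,θ;G)` is their density among the pairs meeting exactly in `T`; the
two differ by at most the proportion of the remaining, overlapping pairs. A union bound over a
shared vertex `v ∉ T` bounds that proportion by `n (C(n-1,k-1) / C(n,k))² = k² / n`, which is
`O(1 / |V|)`.
-/

open Finset

theorem abs_div_sub_div_le {q r p t e : ℝ} (hq : 0 ≤ q) (hqr : q ≤ r) (hrq : r ≤ q + e)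
    (hqp : q ≤ p) (hpt : p ≤ t) (htp : t ≤ p + e) : |r / t - q / p| ≤ e / t := by
  rcases (hq.trans hqp).eq_or_lt with hp | hp
  · obtain rfl : q = 0 := by linarith
    rw [← hp, div_zero, sub_zero, abs_of_nonneg (div_nonneg hqr (by linarith))]
    exact div_le_div_of_nonneg_right (by linarith) (by linarith)
  have ht : 0 < t := hp.trans_le hpt
  have key : |r * p - t * q| ≤ e * p := abs_le.2 ⟨by nlinarith, by nlinarith⟩
  calc |r / t - q / p| = |r * p - t * q| / (t * p) := by
        rw [div_sub_div _ _ ht.ne' hp.ne', abs_div, abs_of_pos (mul_pos ht hp)]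
    _ ≤ e * p / (t * p) := by gcongr
    _ = e / t := mul_div_mul_right _ _ hp.ne'

theorem abs_card_div_sub_card_filter_div_le {α : Type*} {S U : Finset α} (hSU : S ⊆ U)
    (p : α → Prop) [DecidablePred p] :
    |(#S : ℝ) / #U - #(S.filter p) / #(U.filter p)| ≤ #(U.filter (¬ p ·)) / #U := by
  have hS := card_filter_add_card_filter_not (s := S) p
  have hU := card_filter_add_card_filter_not (s := U) p
  have hbad := card_le_card (filter_subset_filter (fun a => ¬ p a) hSU)
  apply abs_div_sub_div_le (by positivity)
  · exact_mod_cast card_filter_le S p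
  · exact_mod_cast (by omega : #S ≤ #(S.filter p) + #(U.filter (¬ p ·)))
  · exact_mod_cast card_le_card (filter_subset_filter p hSU)
  · exact_mod_cast card_filter_le U p
  · exact_mod_cast hU.ge

section Supersets

variable {V : Type*} [Fintype V] [DecidableEq V]

def supersetsOfCard (T : Finset V) (m : ℕ) : Finset (Finset V) :=
  (univ.powersetCard m).filter (T ⊆ ·)

def overlappingPairs (T : Finset V) (m : ℕ) : Finset (Finset V × Finset V) :=
  (supersetsOfCard T m ×ˢ supersetsOfCard T m).filter (fun P => P.1 ∩ P.2 ≠ T)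

@[simp]
theorem mem_supersetsOfCard {T R : Finset V} {m : ℕ} :
    R ∈ supersetsOfCard T m ↔ #R = m ∧ T ⊆ R := by
  simp [supersetsOfCard]

theorem card_supersetsOfCard {T : Finset V} {m : ℕ} (h : #T ≤ m) :
    #(supersetsOfCard T m) = (Fintype.card V - #T).choose (m - #T) := by
  rw [supersetsOfCard, card_filter_powersetCard_subset _ _ _ (subset_univ T) h, card_univ]

theorem card_mul_card_supersetsOfCard_insert {T : Finset V} {v : V} (hv : v ∉ T) (m : ℕ) :
    (Fintype.card V - #T) * #(supersetsOfCard (insert v T) m)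
      = (m - #T) * #(supersetsOfCard T m) := by
  have hTv : #(insert v T) = #T + 1 := card_insert_of_notMem hv
  rcases le_or_gt m #T with hm | hm
  · have : supersetsOfCard (insert v T) m = ∅ := by
      refine filter_eq_empty_iff.2 fun R hR hsub => ?_
      have := card_le_card hsub
      rw [mem_powersetCard] at hR
      omega
    simp [this, Nat.sub_eq_zero_of_le hm]
  have hTV : #T < Fintype.card V := by
    rw [← card_univ]; exact card_lt_card (ssubset_univ_iff.2 fun h => hv (h ▸ mem_univ v))
  rw [card_supersetsOfCard hm.le, card_supersetsOfCard (by omega), hTv]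
  obtain ⟨n, hn⟩ := Nat.exists_eq_add_one.2 (by omega : 0 < Fintype.card V - #T)
  obtain ⟨k, hk⟩ := Nat.exists_eq_add_one.2 (by omega : 0 < m - #T)
  rw [hn, hk, show Fintype.card V - (#T + 1) = n by omega, show m - (#T + 1) = k by omega,
    Nat.add_one_mul_choose_eq, mul_comm]

theorem overlappingPairs_subset_biUnion (T : Finset V) (m : ℕ) :
    overlappingPairs T m ⊆ Tᶜ.biUnion fun v =>
      supersetsOfCard (insert v T) m ×ˢ supersetsOfCard (insert v T) m := by
  intro P hP
  simp only [overlappingPairs, mem_filter, mem_product, mem_supersetsOfCard] at hP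
  obtain ⟨⟨⟨h1, hT1⟩, h2, hT2⟩, hne⟩ := hP
  obtain ⟨v, hv, hvT⟩ := exists_of_ssubset ((subset_inter hT1 hT2).ssubset_of_ne (Ne.symm hne))
  rw [mem_inter] at hv
  simp only [mem_biUnion, mem_compl, mem_product, mem_supersetsOfCard, insert_subset_iff]
  exact ⟨v, hvT, ⟨h1, hv.1, hT1⟩, h2, hv.2, hT2⟩

theorem card_mul_card_overlappingPairs_le (T : Finset V) (m : ℕ) :
    (Fintype.card V - #T) * #(overlappingPairs T m)
      ≤ ((m - #T) * #(supersetsOfCard T m)) ^ 2 := by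
  set n := Fintype.card V - #T
  rcases Nat.eq_zero_or_pos n with hn | hn
  · simp [hn]
  refine Nat.le_of_mul_le_mul_left ?_ hn
  calc n * (n * #(overlappingPairs T m))
      ≤ n * (n * ∑ v ∈ Tᶜ, #(supersetsOfCard (insert v T) m) ^ 2) := by
        gcongr
        refine (card_le_card (overlappingPairs_subset_biUnion T m)).trans
          (card_biUnion_le.trans_eq ?_)
        simp only [card_product, sq]
    _ = ∑ v ∈ Tᶜ, (n * #(supersetsOfCard (insert v T) m)) ^ 2 := by
        rw [← mul_assoc, mul_sum]; exact sum_congr rfl fun _ _ => by ring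
    _ = n * ((m - #T) * #(supersetsOfCard T m)) ^ 2 := by
        rw [sum_congr rfl fun v hv =>
          by rw [card_mul_card_supersetsOfCard_insert (mem_compl.1 hv)], sum_const, card_compl,
          smul_eq_mul]

theorem overlappingPairs_eq_empty (T : Finset V) (m : ℕ) (h : #T = Fintype.card V) :
    overlappingPairs T m = ∅ := by
  obtain rfl := eq_univ_of_card T h
  refine filter_eq_empty_iff.2 fun P hP => ?_
  simp only [mem_product, mem_supersetsOfCard, univ_subset_iff] at hP
  simp [hP.1.2, hP.2.2]

theorem card_overlappingPairs_div_le (T : Finset V) (m : ℕ) :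
    (#(overlappingPairs T m) : ℝ) / #(supersetsOfCard T m ×ˢ supersetsOfCard T m)
      ≤ ((m - #T : ℕ) : ℝ) ^ 2 / (Fintype.card V - #T : ℕ) := by
  rcases Nat.eq_zero_or_pos (Fintype.card V - #T) with hn | hn
  · rw [overlappingPairs_eq_empty T m (by have := card_le_univ T; omega), card_empty,
      Nat.cast_zero, zero_div]
    positivity
  rcases Nat.eq_zero_or_pos #(supersetsOfCard T m) with hD | hD
  · rw [card_product, hD, zero_mul, Nat.cast_zero, div_zero]
    positivity
  rw [card_product, div_le_div_iff₀ (by positivity) (by exact_mod_cast hn)]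
  exact_mod_cast (mul_comm _ _).trans_le
    ((card_mul_card_overlappingPairs_le T m).trans_eq (by ring))

end Supersets

theorem sub_sq_div_sub_le (m s N : ℕ) :
    ((m - s : ℕ) : ℝ) ^ 2 / (N - s : ℕ) ≤ (m ^ 2 * (m + 1) : ℕ) / N := by
  rcases Nat.eq_zero_or_pos (N - s) with hn | hn
  · rw [hn, Nat.cast_zero, div_zero]; positivity
  rcases le_or_gt s m with hsm | hsm
  · rw [div_le_div_iff₀ (by exact_mod_cast hn) (by exact_mod_cast (by omega : 0 < N))]
    have hk : (m - s) ^ 2 ≤ m ^ 2 := Nat.pow_le_pow_left (Nat.sub_le m s) 2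
    have hN : N ≤ (N - s) * (m + 1) := by nlinarith [Nat.sub_add_cancel (by omega : s ≤ N)]
    exact_mod_cast (Nat.mul_le_mul hk hN).trans_eq (by ring)
  · rw [Nat.sub_eq_zero_of_le hsm.le, Nat.cast_zero, zero_pow two_ne_zero, zero_div]
    positivity

section Flags

variable {s m : ℕ} {V : Type*} [Fintype V] [DecidableEq V] {G : SimpleGraph V} {θ : Fin s → V}
  {T : Finset V}

theorem pFlag_eq_card_div (hT : (T : Set V) = Set.range θ) (F : SimpleGraph (Fin m))
    (l : Fin s → Fin m) [DecidablePred (FlagCopy G θ F l)] :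
    pFlag G θ F l = (#((supersetsOfCard T m).filter (FlagCopy G θ F l)) : ℝ)
      / #(supersetsOfCard T m) := by
  rw [pFlag, ← hT, ← Set.ncard_coe_finset, ← Set.ncard_coe_finset]
  congr 3 <;> ext R <;> simp [and_assoc]

theorem pFlagPair_eq_card_div (hT : (T : Set V) = Set.range θ) (Fa Fb : SimpleGraph (Fin m))
    (la lb : Fin s → Fin m) [DecidablePred (FlagCopy G θ Fa la)]
    [DecidablePred (FlagCopy G θ Fb lb)] :
    pFlagPair G θ Fa Fb la lb =
      (#(((supersetsOfCard T m).filter (FlagCopy G θ Fa la) ×ˢ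
          (supersetsOfCard T m).filter (FlagCopy G θ Fb lb)).filter
            (fun P => P.1 ∩ P.2 = T)) : ℝ)
      / #((supersetsOfCard T m ×ˢ supersetsOfCard T m).filter (fun P => P.1 ∩ P.2 = T)) := by
  have hinter : ∀ R S : Finset V,
      (↑R ∩ ↑S : Set V) = Set.range θ ↔ T ⊆ R ∧ T ⊆ S ∧ R ∩ S = T := by
    intro R S
    rw [← hT, ← coe_inter, coe_inj]
    exact ⟨fun h => ⟨h ▸ inter_subset_left, h ▸ inter_subset_right, h⟩, fun h => h.2.2⟩
  rw [pFlagPair, ← Set.ncard_coe_finset, ← Set.ncard_coe_finset]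
  congr 3 <;> ext P <;> simp only [hinter, Set.mem_ofPred_eq, coe_filter, mem_product,
    mem_filter, mem_supersetsOfCard] <;> tauto

theorem abs_pFlag_mul_pFlag_sub_pFlagPair_le (hT : (T : Set V) = Set.range θ)
    (Fa Fb : SimpleGraph (Fin m)) (la lb : Fin s → Fin m) :
    |pFlag G θ Fa la * pFlag G θ Fb lb - pFlagPair G θ Fa Fb la lb|
      ≤ #(overlappingPairs T m) / #(supersetsOfCard T m ×ˢ supersetsOfCard T m) := by
  classical
  rw [pFlag_eq_card_div hT, pFlag_eq_card_div hT, pFlagPair_eq_card_div hT, div_mul_div_comm,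
    ← Nat.cast_mul, ← Nat.cast_mul, ← card_product, ← card_product]
  exact abs_card_div_sub_card_filter_div_le
    (product_subset_product (filter_subset _ _) (filter_subset _ _)) _

end Flags

theorem stmt18_general (s m : ℕ) (σ : SimpleGraph (Fin s))
    (Fa Fb : SimpleGraph (Fin m)) (la lb : Fin s → Fin m) :
    ∃ C : ℝ, ∀ (V : Type) (_ : Fintype V) (G : SimpleGraph V) (θ : Fin s → V),
      Function.Injective θ → (∀ i j, σ.Adj i j ↔ G.Adj (θ i) (θ j)) →
      |pFlag G θ Fa la * pFlag G θ Fb lb - pFlagPair G θ Fa Fb la lb|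
        ≤ C / (Fintype.card V : ℝ) := by
  classical
  refine ⟨(m ^ 2 * (m + 1) : ℕ), fun V _ G θ _ _ => ?_⟩
  have hT : ((univ.image θ : Finset V) : Set V) = Set.range θ := by simp
  calc _ ≤ _ := abs_pFlag_mul_pFlag_sub_pFlagPair_le hT Fa Fb la lb
    _ ≤ _ := card_overlappingPairs_div_le _ m
    _ ≤ _ := sub_sq_div_sub_le m _ _

/-- For σ-flags `F_a`, `F_b` of size `m` over a fixed type `σ`, the product of
flag densities approximately factorizes: for any graph `G` and any embedding `θ`
of `σ` into `G`,
`p(F_a,θ;G)·p(F_b,θ;G) = p(F_a,F_b,θ;G) + O(1/|V(G)|)`. -/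
theorem stmt18 (s m : ℕ) (σ : SimpleGraph (Fin s))
    (Fa Fb : SimpleGraph (Fin m)) (la lb : Fin s → Fin m)
    (hla : Function.Injective la ∧ ∀ i j, σ.Adj i j ↔ Fa.Adj (la i) (la j))
    (hlb : Function.Injective lb ∧ ∀ i j, σ.Adj i j ↔ Fb.Adj (lb i) (lb j)) :
    ∃ C : ℝ, ∀ (V : Type) (_ : Fintype V) (G : SimpleGraph V) (θ : Fin s → V),
      Function.Injective θ → (∀ i j, σ.Adj i j ↔ G.Adj (θ i) (θ j)) →
      |pFlag G θ Fa la * pFlag G θ Fb lb - pFlagPair G θ Fa Fb la lb|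
        ≤ C / (Fintype.card V : ℝ) :=
  stmt18_general s m σ Fa Fb la lb
end
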